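/- arXiv:2004.10847 — 7 statements merged into one kernel-verified Lean document; each statement's English description precedes it below -/
import Mathlib

section
/- Let x, x_d : ℝ → ℝⁿ be twice differentiable curves, let K_P and K_D be symmetric positive definite real n×n matrices, and let w : ℝ → ℝⁿ be continuous. Suppose the closed-loop dynamics satisfy ẍ(t) = ẍ_d(t) − K_D·(ẋ(t) − ẋ_d(t)) − K_P·∫₀ᵗ (ẋ(u) − ẋ_d(u)) du + w(t) for all t. Then the Lyapunov function V(t) = (1/2)‖ẋ(t) − ẋ_d(t)‖² + (1/2)⟨∫₀ᵗ (ẋ(u) − ẋ_d(u)) du, K_P·∫₀ᵗ (ẋ(u) − ẋ_d(u)) du⟩ is differentiable with V′(t) = −⟨ẋ(t) − ẋ_d(t), K_D·(ẋ(t) − ẋ_d(t))⟩ + ⟨ẋ(t) − ẋ_d(t), w(t)⟩ for every t. -/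
open scoped RealInnerProductSpace

/-
By the fundamental theorem of calculus `∫₀ᵗ ẋ̃` has derivative `ẋ̃`, and since `K_P` is symmetric
the quadratic term contributes `⟪ẋ̃, K_P ∫ẋ̃⟫`, so `V′ = ⟪ẋ̃, ẍ̃ + K_P ∫ẋ̃⟫`. Along the closed loop
`ẍ̃ = −K_D ẋ̃ − K_P ∫ẋ̃ + w`, so the integral term cancels.
-/

section Energy

variable {E : Type*} [NormedAddCommGroup E] [InnerProductSpace ℝ E] [FiniteDimensional ℝ E]
  {T : E →ₗ[ℝ] E}

theorem HasDerivAt.inner_apply_self_of_isSymmetric (hT : T.IsSymmetric) {z : ℝ → E} {z' : E}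
    {t : ℝ} (hz : HasDerivAt z z' t) :
    HasDerivAt (fun s => ⟪z s, T (z s)⟫) (2 * ⟪z', T (z t)⟫) t := by
  have hTz : HasDerivAt (fun s => T (z s)) (T z') t :=
    T.toContinuousLinearMap.hasFDerivAt.comp_hasDerivAt t hz
  refine (hz.inner ℝ hTz).congr_deriv ?_
  rw [← hT, real_inner_comm]
  ring

theorem HasDerivAt.half_norm_sq_add_half_inner_apply_self (hT : T.IsSymmetric)
    {e z : ℝ → E} {e' : E} {t : ℝ} (he : HasDerivAt e e' t) (hz : HasDerivAt z (e t) t) :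
    HasDerivAt (fun s => (1 / 2) * ‖e s‖ ^ 2 + (1 / 2) * ⟪z s, T (z s)⟫)
      ⟪e t, e' + T (z t)⟫ t := by
  refine ((he.norm_sq.const_mul (1 / 2)).add
    ((hz.inner_apply_self_of_isSymmetric hT).const_mul (1 / 2))).congr_deriv ?_
  rw [inner_add_right]
  ring

end Energy

theorem stmt2_general (n : ℕ) (x xd : ℝ → EuclideanSpace ℝ (Fin n))
    (KP KD : Matrix (Fin n) (Fin n) ℝ)
    (w : ℝ → EuclideanSpace ℝ (Fin n))
    (hx' : Differentiable ℝ (deriv x))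
    (hxd' : Differentiable ℝ (deriv xd))
    (hKPsymm : KP.IsSymm)
    (e z : ℝ → EuclideanSpace ℝ (Fin n))
    (he : ∀ t, e t = deriv x t - deriv xd t)
    (hz : ∀ t, z t = ∫ s in (0:ℝ)..t, e s)
    (hdyn : ∀ t, deriv (deriv x) t = deriv (deriv xd) t
        - Matrix.toEuclideanLin KD (e t) - Matrix.toEuclideanLin KP (z t) + w t)
    (V : ℝ → ℝ)
    (hV : ∀ t, V t = (1/2) * ‖e t‖^2
        + (1/2) * ⟪z t, Matrix.toEuclideanLin KP (z t)⟫) :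
    Differentiable ℝ V ∧
      ∀ t, deriv V t = -⟪e t, Matrix.toEuclideanLin KD (e t)⟫ + ⟪e t, w t⟫ := by
  have hKP : (Matrix.toEuclideanLin KP).IsSymmetric :=
    Matrix.isSymmetric_toEuclideanLin_iff.mpr hKPsymm
  have he' (t : ℝ) : HasDerivAt e
      (-Matrix.toEuclideanLin KD (e t) - Matrix.toEuclideanLin KP (z t) + w t) t := by
    have h : HasDerivAt e (deriv (deriv x) t - deriv (deriv xd) t) t := by
      rw [funext he]
      exact (hx' t).hasDerivAt.sub (hxd' t).hasDerivAt
    refine h.congr_deriv ?_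
    rw [hdyn t]
    abel
  have hz' (t : ℝ) : HasDerivAt z (e t) t := by
    have he_cont : Continuous e := continuous_iff_continuousAt.2 fun s => (he' s).continuousAt
    rw [funext hz]
    exact (he_cont.integral_hasStrictDerivAt 0 t).hasDerivAt
  have hV' (t : ℝ) : HasDerivAt V
      (-⟪e t, Matrix.toEuclideanLin KD (e t)⟫ + ⟪e t, w t⟫) t := by
    rw [funext hV]
    refine ((he' t).half_norm_sq_add_half_inner_apply_self hKP (hz' t)).congr_deriv ?_
    simp only [inner_add_right, inner_sub_right, inner_neg_right]
    ring
  exact ⟨fun t => (hV' t).differentiableAt, fun t => (hV' t).deriv⟩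

/-- Vector closed loop `ẍ = ẍ_d − K_D ẋ̃ − K_P ∫₀ᵗ ẋ̃ + w` with symmetric positive
definite gains: the Lyapunov function
`V(t) = (1/2)‖ẋ̃(t)‖² + (1/2)⟨∫₀ᵗ ẋ̃, K_P ∫₀ᵗ ẋ̃⟩` is differentiable with
`V′(t) = −⟨ẋ̃(t), K_D ẋ̃(t)⟩ + ⟨ẋ̃(t), w(t)⟩`. -/
theorem stmt2 (n : ℕ) (x xd : ℝ → EuclideanSpace ℝ (Fin n))
    (KP KD : Matrix (Fin n) (Fin n) ℝ)
    (w : ℝ → EuclideanSpace ℝ (Fin n))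
    (hx : Differentiable ℝ x) (hx' : Differentiable ℝ (deriv x))
    (hxd : Differentiable ℝ xd) (hxd' : Differentiable ℝ (deriv xd))
    (hKPsymm : KP.IsSymm) (hKP : KP.PosDef)
    (hKDsymm : KD.IsSymm) (hKD : KD.PosDef)
    (hw : Continuous w)
    (e z : ℝ → EuclideanSpace ℝ (Fin n))
    (he : ∀ t, e t = deriv x t - deriv xd t)
    (hz : ∀ t, z t = ∫ s in (0:ℝ)..t, e s)
    (hdyn : ∀ t, deriv (deriv x) t = deriv (deriv xd) t
        - Matrix.toEuclideanLin KD (e t) - Matrix.toEuclideanLin KP (z t) + w t)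
    (V : ℝ → ℝ)
    (hV : ∀ t, V t = (1/2) * ‖e t‖^2
        + (1/2) * ⟪z t, Matrix.toEuclideanLin KP (z t)⟫) :
    Differentiable ℝ V ∧
      ∀ t, deriv V t = -⟪e t, Matrix.toEuclideanLin KD (e t)⟫ + ⟪e t, w t⟫ :=
  stmt2_general n x xd KP KD w hx' hxd' hKPsymm e z he hz hdyn V hV
end

section
/- Let x, x_d : ℝ → ℝⁿ be twice differentiable curves, let K_P and K_D be symmetric positive definite real n×n matrices, let λ > 0 satisfy ⟨v, K_P v⟩ ≥ λ‖v‖² for all v ∈ ℝⁿ, and let w : ℝ → ℝⁿ be continuous. Suppose ẍ(t) = ẍ_d(t) − K_D·(ẋ(t) − ẋ_d(t)) − K_P·∫₀ᵗ (ẋ(u) − ẋ_d(u)) du + w(t) for all t, and that the interaction is helpful for all time: ⟨ẋ(t) − ẋ_d(t), w(t)⟩ ≤ 0 for every t ≥ 0. Then the Lyapunov function V(t) = (1/2)‖ẋ(t) − ẋ_d(t)‖² + (1/2)⟨∫₀ᵗ (ẋ(u) − ẋ_d(u)) du, K_P·∫₀ᵗ (ẋ(u) − ẋ_d(u)) du⟩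 is nonincreasing on [0, ∞), and the trajectories are globally bounded: for every t ≥ 0, ‖ẋ(t) − ẋ_d(t)‖² ≤ ‖ẋ(0) − ẋ_d(0)‖² and λ·‖∫₀ᵗ (ẋ(u) − ẋ_d(u)) du‖² ≤ ‖ẋ(0) − ẋ_d(0)‖². -/
/-!
Along the closed loop the error `e = ẋ − ẋ_d` and its integral `z` satisfy
`ė = w − K_D e − K_P z`, `ż = e`, so for symmetric `K_P` the derivative of
`V = ½‖e‖² + ½⟨z, K_P z⟩` is `⟨e, w⟩ − ⟨e, K_D e⟩`: the `K_P` terms cancel. Both remaining terms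
are nonpositive when the interaction is helpful, so `V` decreases from `V(0) = ½‖e(0)‖²`, and this
bounds each of its two nonnegative summands.
-/

open scoped RealInnerProductSpace

variable {E : Type*} [NormedAddCommGroup E] [InnerProductSpace ℝ E]

theorem LinearMap.IsSymmetric.hasDerivAt_inner_map_self [FiniteDimensional ℝ E]
    {A : E →ₗ[ℝ] E} (hA : A.IsSymmetric) {z : ℝ → E} {z' : E} {t : ℝ}
    (hz : HasDerivAt z z' t) :
    HasDerivAt (fun s => ⟪z s, A (z s)⟫) (2 * ⟪z', A (z t)⟫) t := by
  have hAz : HasDerivAt (fun s => A (z s)) (A z') t :=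
    A.toContinuousLinearMap.hasFDerivAt.comp_hasDerivAt t hz
  refine (hz.inner ℝ hAz).congr_deriv ?_
  rw [← hA, real_inner_comm (A (z t))]
  ring

noncomputable def lyapunov (A : E →ₗ[ℝ] E) (e z : ℝ → E) (t : ℝ) : ℝ :=
  1 / 2 * ‖e t‖ ^ 2 + 1 / 2 * ⟪z t, A (z t)⟫

section ClosedLoop

variable [FiniteDimensional ℝ E] {A D : E →ₗ[ℝ] E} {e z w : ℝ → E}

theorem hasDerivAt_lyapunov (hA : A.IsSymmetric) {t : ℝ} (hz : HasDerivAt z (e t) t)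
    (he : HasDerivAt e (w t - D (e t) - A (z t)) t) :
    HasDerivAt (lyapunov A e z) (⟪e t, w t⟫ - ⟪e t, D (e t)⟫) t := by
  refine (((he.norm_sq).const_mul (1 / 2)).add
    ((hA.hasDerivAt_inner_map_self hz).const_mul (1 / 2))).congr_deriv ?_
  simp only [inner_sub_right]
  ring

theorem antitoneOn_lyapunov (hA : A.IsSymmetric) (hD : ∀ v, 0 ≤ ⟪v, D v⟫)
    (hz : ∀ t, HasDerivAt z (e t) t)
    (he : ∀ t, HasDerivAt e (w t - D (e t) - A (z t)) t)
    (hhelp : ∀ t, 0 ≤ t → ⟪e t, w t⟫ ≤ 0) :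
    AntitoneOn (lyapunov A e z) (Set.Ici 0) := by
  have hV := fun t => hasDerivAt_lyapunov hA (hz t) (he t)
  refine antitoneOn_of_hasDerivWithinAt_nonpos (convex_Ici 0)
    (fun t _ => (hV t).continuousAt.continuousWithinAt)
    (fun t _ => (hV t).hasDerivWithinAt) fun t ht => ?_
  rw [interior_Ici] at ht
  linarith [hhelp t (le_of_lt ht), hD (e t)]

end ClosedLoop

theorem norm_sq_le_of_lyapunov_le {A : E →ₗ[ℝ] E} (hA : ∀ v, 0 ≤ ⟪v, A v⟫) {lam : ℝ}
    (hlow : ∀ v, lam * ‖v‖ ^ 2 ≤ ⟪v, A v⟫) {e z : ℝ → E} (hz0 : z 0 = 0) {t : ℝ}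
    (hVt : lyapunov A e z t ≤ lyapunov A e z 0) :
    ‖e t‖ ^ 2 ≤ ‖e 0‖ ^ 2 ∧ lam * ‖z t‖ ^ 2 ≤ ‖e 0‖ ^ 2 := by
  simp only [lyapunov, hz0, map_zero, inner_zero_left] at hVt
  constructor <;> nlinarith [hA (z t), hlow (z t), sq_nonneg ‖e t‖]

theorem stmt3_general (n : ℕ) (x xd : ℝ → EuclideanSpace ℝ (Fin n))
    (KP KD : Matrix (Fin n) (Fin n) ℝ) (lam : ℝ)
    (w : ℝ → EuclideanSpace ℝ (Fin n))
    (hx' : Differentiable ℝ (deriv x))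
    (hxd' : Differentiable ℝ (deriv xd))
    (hKP : KP.PosDef)
    (hKD : KD.PosDef)
    (hlow : ∀ v : EuclideanSpace ℝ (Fin n), lam * ‖v‖^2 ≤ ⟪v, Matrix.toEuclideanLin KP v⟫)
    (e z : ℝ → EuclideanSpace ℝ (Fin n))
    (he : ∀ t, e t = deriv x t - deriv xd t)
    (hz : ∀ t, z t = ∫ s in (0:ℝ)..t, e s)
    (hdyn : ∀ t, deriv (deriv x) t = deriv (deriv xd) t
        - Matrix.toEuclideanLin KD (e t) - Matrix.toEuclideanLin KP (z t) + w t)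
    (hhelp : ∀ t, 0 ≤ t → ⟪e t, w t⟫ ≤ 0)
    (V : ℝ → ℝ)
    (hV : ∀ t, V t = (1/2) * ‖e t‖^2
        + (1/2) * ⟪z t, Matrix.toEuclideanLin KP (z t)⟫) :
    AntitoneOn V (Set.Ici (0:ℝ)) ∧
      ∀ t, 0 ≤ t → ‖e t‖^2 ≤ ‖e 0‖^2 ∧ lam * ‖z t‖^2 ≤ ‖e 0‖^2 := by
  have hA := Matrix.isPositive_toEuclideanLin_iff.2 hKP.posSemidef
  have hD := (Matrix.isPositive_toEuclideanLin_iff.2 hKD.posSemidef).inner_nonneg_right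
  have he_fun : e = deriv x - deriv xd := funext he
  have he_deriv : ∀ t, HasDerivAt e (w t - Matrix.toEuclideanLin KD (e t)
      - Matrix.toEuclideanLin KP (z t)) t := fun t => by
    have h := (hx' t).hasDerivAt.sub (hxd' t).hasDerivAt
    rw [← he_fun] at h
    refine h.congr_deriv ?_
    rw [hdyn t]
    abel
  have hz_deriv : ∀ t, HasDerivAt z (e t) t := fun t => by
    rw [funext hz]
    have he_cont : Continuous e := he_fun ▸ (hx'.sub hxd').continuous
    exact (he_cont.integral_hasStrictDerivAt 0 t).hasDerivAt
  have hV_eq : V = lyapunov (Matrix.toEuclideanLin KP) e z := funext hV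
  have hanti := antitoneOn_lyapunov hA.isSymmetric hD hz_deriv he_deriv hhelp
  have hz0 : z 0 = 0 := by rw [hz 0, intervalIntegral.integral_same]
  refine ⟨hV_eq ▸ hanti, fun t ht => ?_⟩
  exact norm_sq_le_of_lyapunov_le hA.inner_nonneg_right hlow hz0
    (hanti Set.self_mem_Ici ht ht)

/-- Vector closed loop `ẍ = ẍ_d − K_D ẋ̃ − K_P ∫₀ᵗ ẋ̃ + w` with symmetric positive
definite gains and `⟨v, K_P v⟩ ≥ λ‖v‖²`: if the interaction is helpful for all time
(`⟨ẋ̃(t), w(t)⟩ ≤ 0` for `t ≥ 0`), then the Lyapunov function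
`V(t) = (1/2)‖ẋ̃(t)‖² + (1/2)⟨∫₀ᵗ ẋ̃, K_P ∫₀ᵗ ẋ̃⟩` is nonincreasing on `[0,∞)` and the
trajectories are globally bounded: `‖ẋ̃(t)‖² ≤ ‖ẋ̃(0)‖²` and `λ‖∫₀ᵗ ẋ̃‖² ≤ ‖ẋ̃(0)‖²`. -/
theorem stmt3 (n : ℕ) (x xd : ℝ → EuclideanSpace ℝ (Fin n))
    (KP KD : Matrix (Fin n) (Fin n) ℝ) (lam : ℝ)
    (w : ℝ → EuclideanSpace ℝ (Fin n))
    (hx : Differentiable ℝ x) (hx' : Differentiable ℝ (deriv x))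
    (hxd : Differentiable ℝ xd) (hxd' : Differentiable ℝ (deriv xd))
    (hKPsymm : KP.IsSymm) (hKP : KP.PosDef)
    (hKDsymm : KD.IsSymm) (hKD : KD.PosDef)
    (hlam : 0 < lam)
    (hlow : ∀ v : EuclideanSpace ℝ (Fin n), lam * ‖v‖^2 ≤ ⟪v, Matrix.toEuclideanLin KP v⟫)
    (hw : Continuous w)
    (e z : ℝ → EuclideanSpace ℝ (Fin n))
    (he : ∀ t, e t = deriv x t - deriv xd t)
    (hz : ∀ t, z t = ∫ s in (0:ℝ)..t, e s)
    (hdyn : ∀ t, deriv (deriv x) t = deriv (deriv xd) t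
        - Matrix.toEuclideanLin KD (e t) - Matrix.toEuclideanLin KP (z t) + w t)
    (hhelp : ∀ t, 0 ≤ t → ⟪e t, w t⟫ ≤ 0)
    (V : ℝ → ℝ)
    (hV : ∀ t, V t = (1/2) * ‖e t‖^2
        + (1/2) * ⟪z t, Matrix.toEuclideanLin KP (z t)⟫) :
    AntitoneOn V (Set.Ici (0:ℝ)) ∧
      ∀ t, 0 ≤ t → ‖e t‖^2 ≤ ‖e 0‖^2 ∧ lam * ‖z t‖^2 ≤ ‖e 0‖^2 :=
  stmt3_general n x xd KP KD lam w hx' hxd' hKP hKD hlow e z he hz hdyn hhelp V hV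
end

section
/- Let χ̃ : ℝ → ℝⁿ be a differentiable error curve, z(t) = ∫₀ᵗ χ̃(u) du, let K_d, K_p > 0 be scalar gains, K_D a symmetric positive definite real n×n matrix, and α : ℝ → ℝ continuous. Suppose the partner-aware closed loop holds for all t: K_d·χ̃′(t) + K_p·z(t) = −K_D·χ̃(t) − max(0, α(t))·(‖χ̃(t)‖⁻¹ · χ̃(t)) (with the convention that ‖χ̃(t)‖⁻¹·χ̃(t) = 0 when χ̃(t) = 0). Then the Lyapunov function V(t) = (K_d/2)‖χ̃(t)‖² + (K_p/2)‖z(t)‖² is differentiable with V′(t) = −⟨χ̃(t), K_D·χ̃(t)⟩ − max(0, α(t))·‖χ̃(t)‖, and in particular V′(t) ≤ 0 for every t. -/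
open scoped RealInnerProductSpace

/-!
Pairing the closed loop with `χ̃(t)` turns its left side into `V′(t)`, because
`V′ = K_d ⟪χ̃, χ̃′⟫ + K_p ⟪z, χ̃⟫` (with `z′ = χ̃` by the fundamental theorem of calculus), and its
right side into `-⟪χ̃, K_D χ̃⟫ - max(0, α)‖χ̃‖`, because `⟪x, ‖x‖⁻¹ • x⟫ = ‖x‖` for every `x`,
including `x = 0`. Both terms are nonpositive since `K_D` is positive semidefinite.
-/

section Lyapunov

variable {E : Type*} [NormedAddCommGroup E] [InnerProductSpace ℝ E]

theorem real_inner_inv_norm_smul_self (x : E) : ⟪x, ‖x‖⁻¹ • x⟫ = ‖x‖ := by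
  rcases eq_or_ne ‖x‖ 0 with hx | hx
  · simp [hx]
  · rw [real_inner_smul_right, real_inner_self_eq_norm_sq]
    field_simp

theorem hasDerivAt_weighted_norm_sq_add {x z : ℝ → E} {x' : E} {t : ℝ} (a b : ℝ)
    (hx : HasDerivAt x x' t) (hz : HasDerivAt z (x t) t) :
    HasDerivAt (fun u ↦ a / 2 * ‖x u‖ ^ 2 + b / 2 * ‖z u‖ ^ 2) ⟪x t, a • x' + b • z t⟫ t := by
  refine ((hx.norm_sq.const_mul (a / 2)).add (hz.norm_sq.const_mul (b / 2))).congr_deriv ?_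
  rw [inner_add_right, real_inner_smul_right, real_inner_smul_right, real_inner_comm (z t)]
  ring

end Lyapunov

theorem stmt4_general (n : ℕ) (χ : ℝ → EuclideanSpace ℝ (Fin n)) (Kd Kp : ℝ)
    (KD : Matrix (Fin n) (Fin n) ℝ) (α : ℝ → ℝ)
    (hχ : Differentiable ℝ χ)
    (hKD : KD.PosDef)
    (z : ℝ → EuclideanSpace ℝ (Fin n))
    (hz : ∀ t, z t = ∫ s in (0:ℝ)..t, χ s)
    (hdyn : ∀ t, Kd • deriv χ t + Kp • z t
        = -(Matrix.toEuclideanLin KD (χ t)) - (max 0 (α t)) • ((‖χ t‖⁻¹) • χ t))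
    (V : ℝ → ℝ)
    (hV : ∀ t, V t = (Kd/2) * ‖χ t‖^2 + (Kp/2) * ‖z t‖^2) :
    Differentiable ℝ V ∧
      (∀ t, deriv V t = -⟪χ t, Matrix.toEuclideanLin KD (χ t)⟫
          - (max 0 (α t)) * ‖χ t‖) ∧
      ∀ t, deriv V t ≤ 0 := by
  have hzderiv (t : ℝ) : HasDerivAt z (χ t) t := by
    rw [funext hz]
    exact (hχ.continuous.integral_hasStrictDerivAt 0 t).hasDerivAt
  have hVderiv (t : ℝ) : HasDerivAt V
      (-⟪χ t, Matrix.toEuclideanLin KD (χ t)⟫ - max 0 (α t) * ‖χ t‖) t := by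
    rw [funext hV]
    convert hasDerivAt_weighted_norm_sq_add Kd Kp (hχ t).hasDerivAt (hzderiv t) using 1
    rw [hdyn, inner_sub_right, inner_neg_right, real_inner_smul_right,
      real_inner_inv_norm_smul_self]
  refine ⟨fun t ↦ (hVderiv t).differentiableAt, fun t ↦ (hVderiv t).deriv, fun t ↦ ?_⟩
  have hKDχ : 0 ≤ ⟪χ t, Matrix.toEuclideanLin KD (χ t)⟫ :=
    (Matrix.isPositive_toEuclideanLin_iff.mpr hKD.posSemidef).inner_nonneg_right _
  rw [(hVderiv t).deriv]
  linarith [mul_nonneg (le_max_left 0 (α t)) (norm_nonneg (χ t))]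

/-- Partner-aware closed loop
`K_d χ̃′(t) + K_p z(t) = −K_D χ̃(t) − max(0, α(t))·(χ̃(t)/‖χ̃(t)‖)` (with the convention
`χ̃/‖χ̃‖ = 0` when `χ̃ = 0`, which holds since `(0:ℝ)⁻¹ = 0` in Lean):
the Lyapunov function `V(t) = (K_d/2)‖χ̃(t)‖² + (K_p/2)‖z(t)‖²` is differentiable with
`V′(t) = −⟨χ̃(t), K_D χ̃(t)⟩ − max(0, α(t))·‖χ̃(t)‖ ≤ 0`. -/
theorem stmt4 (n : ℕ) (χ : ℝ → EuclideanSpace ℝ (Fin n)) (Kd Kp : ℝ)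
    (KD : Matrix (Fin n) (Fin n) ℝ) (α : ℝ → ℝ)
    (hχ : Differentiable ℝ χ) (hKd : 0 < Kd) (hKp : 0 < Kp)
    (hKDsymm : KD.IsSymm) (hKD : KD.PosDef) (hα : Continuous α)
    (z : ℝ → EuclideanSpace ℝ (Fin n))
    (hz : ∀ t, z t = ∫ s in (0:ℝ)..t, χ s)
    (hdyn : ∀ t, Kd • deriv χ t + Kp • z t
        = -(Matrix.toEuclideanLin KD (χ t)) - (max 0 (α t)) • ((‖χ t‖⁻¹) • χ t))
    (V : ℝ → ℝ)
    (hV : ∀ t, V t = (Kd/2) * ‖χ t‖^2 + (Kp/2) * ‖z t‖^2) :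
    Differentiable ℝ V ∧
      (∀ t, deriv V t = -⟪χ t, Matrix.toEuclideanLin KD (χ t)⟫
          - (max 0 (α t)) * ‖χ t‖) ∧
      ∀ t, deriv V t ≤ 0 :=
  stmt4_general n χ Kd Kp KD α hχ hKD z hz hdyn V hV
end

section
/- Let χ̃ : ℝ → ℝⁿ be a differentiable error curve, z(t) = ∫₀ᵗ χ̃(u) du, let K_d, K_p > 0 be scalar gains, K_D a symmetric positive definite real n×n matrix, and α : ℝ → ℝ continuous. Suppose K_d·χ̃′(t) + K_p·z(t) = −K_D·χ̃(t) − max(0, α(t))·(‖χ̃(t)‖⁻¹ · χ̃(t)) for all t (with ‖χ̃(t)‖⁻¹·χ̃(t) = 0 when χ̃(t) = 0). Then the trajectories (χ̃, z) are globally bounded: for every t ≥ 0, (K_d/2)‖χ̃(t)‖² + (K_p/2)‖z(t)‖² ≤ (K_d/2)‖χ̃(0)‖²; in particular ‖χ̃(t)‖ ≤ ‖χ̃(0)‖ and ‖z(t)‖ ≤ √(K_d/K_p)·‖χ̃(0)‖ for all t ≥ 0, so the equilibrium point (χ̃, ∫χ̃) = (0, 0) is stable. -/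
open scoped RealInnerProductSpace

/-!
The energy `V = (K_d/2)‖χ̃‖² + (K_p/2)‖z‖²` is a Lyapunov function: since `z' = χ̃`, its derivative
is `⟪K_d χ̃' + K_p z, χ̃⟫`, which by the closed-loop equation equals
`-⟪K_D χ̃, χ̃⟫ - max(0, α)‖χ̃‖ ≤ 0`. So `V` is antitone, `V(t) ≤ V(0) = (K_d/2)‖χ̃(0)‖²` as
`z(0) = 0`, and both norm bounds are read off this inequality.
-/

section Energy

variable {E : Type*} [NormedAddCommGroup E] [InnerProductSpace ℝ E]

theorem inner_neg_sub_smul_inv_norm_smul_self_nonpos {A : E →ₗ[ℝ] E} (hA : A.IsPositive)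
    {c : ℝ} (hc : 0 ≤ c) (x : E) : ⟪-A x - c • (‖x‖⁻¹ • x), x⟫ ≤ 0 := by
  have hAx : 0 ≤ ⟪A x, x⟫ := hA.re_inner_nonneg_left x
  rw [inner_sub_left, inner_neg_left, real_inner_smul_left, real_inner_smul_left,
    real_inner_self_eq_norm_sq]
  have : 0 ≤ c * (‖x‖⁻¹ * ‖x‖ ^ 2) := by positivity
  linarith

theorem hasDerivAt_energy {x z : ℝ → E} {x' : E} {t : ℝ} (a b : ℝ) (hx : HasDerivAt x x' t)
    (hz : HasDerivAt z (x t) t) :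
    HasDerivAt (fun s => a / 2 * ‖x s‖ ^ 2 + b / 2 * ‖z s‖ ^ 2) ⟪a • x' + b • z t, x t⟫ t := by
  refine ((hx.norm_sq.const_mul (a / 2)).add (hz.norm_sq.const_mul (b / 2))).congr_deriv ?_
  rw [inner_add_left, real_inner_smul_left, real_inner_smul_left, real_inner_comm x']
  ring

theorem antitone_energy {x z : ℝ → E} (a b : ℝ) (hx : Differentiable ℝ x)
    (hz : ∀ t, HasDerivAt z (x t) t) (hdiss : ∀ t, ⟪a • deriv x t + b • z t, x t⟫ ≤ 0) :
    Antitone fun s => a / 2 * ‖x s‖ ^ 2 + b / 2 * ‖z s‖ ^ 2 :=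
  antitone_of_hasDerivAt_nonpos (fun t => hasDerivAt_energy a b (hx t).hasDerivAt (hz t)) hdiss

end Energy

theorem le_and_le_sqrt_div_mul_of_energy_le {a b u v w : ℝ} (ha : 0 < a) (hb : 0 < b)
    (hv : 0 ≤ v) (hw : 0 ≤ w) (h : a / 2 * u ^ 2 + b / 2 * v ^ 2 ≤ a / 2 * w ^ 2) :
    u ≤ w ∧ v ≤ √(a / b) * w := by
  refine ⟨le_of_pow_le_pow_left₀ two_ne_zero hw (by nlinarith), ?_⟩
  rw [← Real.sqrt_sq hw, ← Real.sqrt_mul (by positivity), Real.le_sqrt hv (by positivity),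
    div_mul_eq_mul_div, le_div_iff₀ hb]
  nlinarith

theorem stmt5_general (n : ℕ) (χ : ℝ → EuclideanSpace ℝ (Fin n)) (Kd Kp : ℝ)
    (KD : Matrix (Fin n) (Fin n) ℝ) (α : ℝ → ℝ)
    (hχ : Differentiable ℝ χ) (hKd : 0 < Kd) (hKp : 0 < Kp)
    (hKD : KD.PosDef)
    (z : ℝ → EuclideanSpace ℝ (Fin n))
    (hz : ∀ t, z t = ∫ s in (0:ℝ)..t, χ s)
    (hdyn : ∀ t, Kd • deriv χ t + Kp • z t
        = -(Matrix.toEuclideanLin KD (χ t)) - (max 0 (α t)) • ((‖χ t‖⁻¹) • χ t)) :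
    ∀ t, 0 ≤ t →
      (Kd/2) * ‖χ t‖^2 + (Kp/2) * ‖z t‖^2 ≤ (Kd/2) * ‖χ 0‖^2 ∧
      ‖χ t‖ ≤ ‖χ 0‖ ∧
      ‖z t‖ ≤ Real.sqrt (Kd/Kp) * ‖χ 0‖ := by
  have hz' : ∀ t, HasDerivAt z (χ t) t := fun t => by
    rw [funext hz]
    exact (hχ.continuous.integral_hasStrictDerivAt 0 t).hasDerivAt
  have hdiss : ∀ t, ⟪Kd • deriv χ t + Kp • z t, χ t⟫ ≤ 0 := fun t => by
    rw [hdyn t]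
    exact inner_neg_sub_smul_inv_norm_smul_self_nonpos
      (Matrix.isPositive_toEuclideanLin_iff.mpr hKD.posSemidef) (le_max_left _ _) _
  intro t ht
  have hV : Kd / 2 * ‖χ t‖ ^ 2 + Kp / 2 * ‖z t‖ ^ 2 ≤ Kd / 2 * ‖χ 0‖ ^ 2 := by
    simpa [hz 0] using antitone_energy Kd Kp hχ hz' hdiss ht
  exact ⟨hV, le_and_le_sqrt_div_mul_of_energy_le hKd hKp (norm_nonneg _) (norm_nonneg _) hV⟩

/-- Partner-aware closed loop
`K_d χ̃′(t) + K_p z(t) = −K_D χ̃(t) − max(0, α(t))·(χ̃(t)/‖χ̃(t)‖)`: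
the trajectories `(χ̃, z)` are globally bounded: for every `t ≥ 0`,
`(K_d/2)‖χ̃(t)‖² + (K_p/2)‖z(t)‖² ≤ (K_d/2)‖χ̃(0)‖²`, `‖χ̃(t)‖ ≤ ‖χ̃(0)‖` and
`‖z(t)‖ ≤ √(K_d/K_p)·‖χ̃(0)‖`, so the equilibrium `(χ̃, ∫χ̃) = (0,0)` is stable. -/
theorem stmt5 (n : ℕ) (χ : ℝ → EuclideanSpace ℝ (Fin n)) (Kd Kp : ℝ)
    (KD : Matrix (Fin n) (Fin n) ℝ) (α : ℝ → ℝ)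
    (hχ : Differentiable ℝ χ) (hKd : 0 < Kd) (hKp : 0 < Kp)
    (hKDsymm : KD.IsSymm) (hKD : KD.PosDef) (hα : Continuous α)
    (z : ℝ → EuclideanSpace ℝ (Fin n))
    (hz : ∀ t, z t = ∫ s in (0:ℝ)..t, χ s)
    (hdyn : ∀ t, Kd • deriv χ t + Kp • z t
        = -(Matrix.toEuclideanLin KD (χ t)) - (max 0 (α t)) • ((‖χ t‖⁻¹) • χ t)) :
    ∀ t, 0 ≤ t →
      (Kd/2) * ‖χ t‖^2 + (Kp/2) * ‖z t‖^2 ≤ (Kd/2) * ‖χ 0‖^2 ∧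
      ‖χ t‖ ≤ ‖χ 0‖ ∧
      ‖z t‖ ≤ Real.sqrt (Kd/Kp) * ‖χ 0‖ :=
  stmt5_general n χ Kd Kp KD α hχ hKd hKp hKD z hz hdyn
end

section
/- Let a, b be vectors of an n-dimensional real Euclidean space with b ≠ 0, and let U be a real number with U ≥ 1 and U ≥ ⟨a, b⟩ / ‖b‖². Define the update rule s = min(U, max(1, ⟨a, b⟩ / ‖b‖²)). Then 1 ≤ s ≤ U and ⟨a − s·b, s·b⟩ ≤ 0. -/
open scoped RealInnerProductSpace

section

variable {E : Type*} [NormedAddCommGroup E] [InnerProductSpace ℝ E]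

theorem real_inner_sub_smul_smul_self (a b : E) (s : ℝ) :
    ⟪a - s • b, s • b⟫ = s * (⟪a, b⟫ - s * ‖b‖ ^ 2) := by
  rw [inner_sub_left, real_inner_smul_right, real_inner_smul_left, real_inner_smul_right,
    real_inner_self_eq_norm_sq]
  ring

theorem real_inner_sub_smul_smul_self_nonpos {a b : E} {s : ℝ} (hs : 0 ≤ s)
    (hproj : ⟪a, b⟫ / ‖b‖ ^ 2 ≤ s) : ⟪a - s • b, s • b⟫ ≤ 0 := by
  rcases eq_or_ne b 0 with rfl | hb
  · simp
  have hab : ⟪a, b⟫ ≤ s * ‖b‖ ^ 2 := (div_le_iff₀ (by positivity)).mp hproj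
  rw [real_inner_sub_smul_smul_self]
  exact mul_nonpos_of_nonneg_of_nonpos hs (sub_nonpos.mpr hab)

end

theorem stmt7_general (n : ℕ) (a b : EuclideanSpace ℝ (Fin n)) (U : ℝ)
    (hU1 : 1 ≤ U) (hU2 : ⟪a, b⟫ / ‖b‖^2 ≤ U)
    (s : ℝ) (hsdef : s = min U (max 1 (⟪a, b⟫ / ‖b‖^2))) :
    1 ≤ s ∧ s ≤ U ∧ ⟪a - s • b, s • b⟫ ≤ 0 := by
  have hs : s = max 1 (⟪a, b⟫ / ‖b‖^2) := by rw [hsdef, min_eq_right (max_le hU1 hU2)]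
  have hs1 : 1 ≤ s := hs ▸ le_max_left _ _
  refine ⟨hs1, hs ▸ max_le hU1 hU2, ?_⟩
  exact real_inner_sub_smul_smul_self_nonpos (by linarith) (hs ▸ le_max_right _ _)

/-- Trajectory-advancement update rule `s = min(U, max(1, ⟨a,b⟩/‖b‖²))` with `U ≥ 1`
and `U ≥ ⟨a,b⟩/‖b‖²`: then `1 ≤ s ≤ U` and `⟨a − s·b, s·b⟩ ≤ 0`. -/
theorem stmt7 (n : ℕ) (a b : EuclideanSpace ℝ (Fin n)) (hb : b ≠ 0) (U : ℝ)
    (hU1 : 1 ≤ U) (hU2 : ⟪a, b⟫ / ‖b‖^2 ≤ U)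
    (s : ℝ) (hsdef : s = min U (max 1 (⟪a, b⟫ / ‖b‖^2))) :
    1 ≤ s ∧ s ≤ U ∧ ⟪a - s • b, s • b⟫ ≤ 0 :=
  stmt7_general n a b U hU1 hU2 s hsdef
end

section
/- Let x, x_d : ℝ → ℝⁿ be twice differentiable curves with ẋ_d(t) ≠ 0 for all t, let K_P and K_D be symmetric positive definite real n×n matrices, and let α : ℝ → ℝ be continuous with α(t) > 0 for all t. Suppose the closed-loop dynamics with the correction term hold for all t: ẍ(t) = ẍ_d(t) − K_D·(ẋ(t) − ẋ_d(t)) − K_P·∫₀ᵗ (ẋ(u) − ẋ_d(u)) du + α(t)·(ẋ_d(t)/‖ẋ_d(t)‖), and that ⟨ẋ(t) − ẋ_d(t), ẋ_d(t)⟩ ≤ 0 for all t ≥ 0. Then the Lyapunov function V(t) = (1/2)‖ẋ(t) − ẋ_d(t)‖² + (1/2)⟨∫₀ᵗ (ẋ(u) − ẋ_d(u)) du, K_P·∫₀ᵗ (ẋ(u) − ẋ_d(u)) du⟩ satisfies V′(t) = −⟨ẋ(t) − ẋ_d(t), K_D·(ẋ(t) − ẋ_d(t))⟩ + α(t)·⟨ẋ(t)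 − ẋ_d(t), ẋ_d(t)⟩/‖ẋ_d(t)‖ ≤ 0 for every t ≥ 0, so V is nonincreasing on [0, ∞). -/
open scoped RealInnerProductSpace

/-!
Write `ė = −K_D e − K_P z + w` with `e = ẋ − ẋ_d`, `z = ∫₀ᵗ e` and `w = α ẋ_d/‖ẋ_d‖`. Since `ż = e`
and `K_P` is symmetric, the integral term of `V` contributes `⟨e, K_P z⟩`, which cancels the
`−⟨e, K_P z⟩` coming from `½‖e‖²`. What remains is `V′ = −⟨e, K_D e⟩ + ⟨e, w⟩`: the first term
is nonpositive because `K_D` is positive, the second because `α > 0` and `⟨e, ẋ_d⟩ ≤ 0`.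
-/

section Lyapunov

variable {E : Type*} [NormedAddCommGroup E] [InnerProductSpace ℝ E] [FiniteDimensional ℝ E]

theorem LinearMap.IsSymmetric.hasDerivAt_inner_apply_self {T : E →ₗ[ℝ] E} (hT : T.IsSymmetric)
    {z : ℝ → E} {z' : E} {t : ℝ} (hz : HasDerivAt z z' t) :
    HasDerivAt (fun u => ⟪z u, T (z u)⟫) (2 * ⟪z', T (z t)⟫) t := by
  have hTz : HasDerivAt (fun u => T (z u)) (T z') t :=
    (LinearMap.toContinuousLinearMap T).hasFDerivAt.comp_hasDerivAt t hz
  refine (hz.inner ℝ hTz).congr_deriv ?_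
  rw [← hT, real_inner_comm]
  ring

noncomputable def trackingLyapunov (P : E →ₗ[ℝ] E) (e z : ℝ → E) (t : ℝ) : ℝ :=
  (1 / 2) * ‖e t‖ ^ 2 + (1 / 2) * ⟪z t, P (z t)⟫

theorem hasDerivAt_trackingLyapunov {D P : E →ₗ[ℝ] E} (hP : P.IsSymmetric) {e z : ℝ → E}
    {w : E} {t : ℝ} (hz : HasDerivAt z (e t) t) (he : HasDerivAt e (-D (e t) - P (z t) + w) t) :
    HasDerivAt (trackingLyapunov P e z) (-⟪e t, D (e t)⟫ + ⟪e t, w⟫) t := by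
  refine ((he.norm_sq.const_mul (1 / 2)).add
    ((hP.hasDerivAt_inner_apply_self hz).const_mul (1 / 2))).congr_deriv ?_
  simp only [inner_add_right, inner_sub_right, inner_neg_right]
  ring

end Lyapunov

theorem stmt8_general (n : ℕ) (x xd : ℝ → EuclideanSpace ℝ (Fin n))
    (KP KD : Matrix (Fin n) (Fin n) ℝ) (α : ℝ → ℝ)
    (hx' : Differentiable ℝ (deriv x))
    (hxd' : Differentiable ℝ (deriv xd))
    (hKPsymm : KP.IsSymm) (hKD : KD.PosDef)
    (hαpos : ∀ t, 0 < α t)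
    (e z : ℝ → EuclideanSpace ℝ (Fin n))
    (he : ∀ t, e t = deriv x t - deriv xd t)
    (hz : ∀ t, z t = ∫ s in (0:ℝ)..t, e s)
    (hdyn : ∀ t, deriv (deriv x) t = deriv (deriv xd) t
        - Matrix.toEuclideanLin KD (e t) - Matrix.toEuclideanLin KP (z t)
        + α t • ((‖deriv xd t‖⁻¹) • deriv xd t))
    (hhelp : ∀ t, 0 ≤ t → ⟪e t, deriv xd t⟫ ≤ 0)
    (V : ℝ → ℝ)
    (hV : ∀ t, V t = (1/2) * ‖e t‖^2
        + (1/2) * ⟪z t, Matrix.toEuclideanLin KP (z t)⟫) :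
    (∀ t, deriv V t = -⟪e t, Matrix.toEuclideanLin KD (e t)⟫
        + α t * ⟪e t, deriv xd t⟫ / ‖deriv xd t‖) ∧
    (∀ t, 0 ≤ t → deriv V t ≤ 0) ∧
    AntitoneOn V (Set.Ici (0:ℝ)) := by
  have hKP' : (Matrix.toEuclideanLin KP).IsSymmetric :=
    Matrix.isSymmetric_toEuclideanLin_iff.mpr (Matrix.isHermitian_iff_isSymm.mpr hKPsymm)
  have hKD' : (Matrix.toEuclideanLin KD).IsPositive :=
    Matrix.isPositive_toEuclideanLin_iff.mpr hKD.posSemidef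
  have he_cont : Continuous e := (hx'.sub hxd').continuous.congr fun t => (he t).symm
  have hz_deriv (t : ℝ) : HasDerivAt z (e t) t :=
    (he_cont.integral_hasStrictDerivAt 0 t).hasDerivAt.congr_of_eventuallyEq (.of_forall hz)
  have he_deriv (t : ℝ) : HasDerivAt e (-Matrix.toEuclideanLin KD (e t)
      - Matrix.toEuclideanLin KP (z t) + α t • (‖deriv xd t‖⁻¹ • deriv xd t)) t := by
    refine (((hx' t).hasDerivAt.sub (hxd' t).hasDerivAt).congr_deriv ?_).congr_of_eventuallyEq
      (.of_forall he)
    rw [hdyn t]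
    abel
  have hV_deriv (t : ℝ) : HasDerivAt V (-⟪e t, Matrix.toEuclideanLin KD (e t)⟫
      + α t * ⟪e t, deriv xd t⟫ / ‖deriv xd t‖) t := by
    rw [show V = trackingLyapunov (Matrix.toEuclideanLin KP) e z from funext hV]
    convert hasDerivAt_trackingLyapunov hKP' (hz_deriv t) (he_deriv t) using 1
    rw [real_inner_smul_right, real_inner_smul_right]
    ring
  have hV_nonpos (t : ℝ) (ht : 0 ≤ t) : deriv V t ≤ 0 := by
    have hdamp := hKD'.inner_nonneg_right (e t)
    have hcorr : α t * ⟪e t, deriv xd t⟫ / ‖deriv xd t‖ ≤ 0 :=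
      div_nonpos_of_nonpos_of_nonneg (mul_nonpos_of_nonneg_of_nonpos (hαpos t).le (hhelp t ht))
        (norm_nonneg _)
    rw [(hV_deriv t).deriv]
    linarith
  refine ⟨fun t => (hV_deriv t).deriv, hV_nonpos, ?_⟩
  refine antitoneOn_of_deriv_nonpos (convex_Ici 0)
    (fun t _ => (hV_deriv t).continuousAt.continuousWithinAt)
    (fun t _ => (hV_deriv t).differentiableAt.differentiableWithinAt) fun t ht => ?_
  rw [interior_Ici] at ht
  exact hV_nonpos t (le_of_lt ht)

/-- Closed loop with correction term
`ẍ = ẍ_d − K_D ẋ̃ − K_P ∫₀ᵗ ẋ̃ + α(t)·ẋ_d/‖ẋ_d‖`, with `α(t) > 0` and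
`⟨ẋ̃(t), ẋ_d(t)⟩ ≤ 0` for all `t ≥ 0`: the Lyapunov function
`V(t) = (1/2)‖ẋ̃(t)‖² + (1/2)⟨∫₀ᵗ ẋ̃, K_P ∫₀ᵗ ẋ̃⟩` satisfies
`V′(t) = −⟨ẋ̃(t), K_D ẋ̃(t)⟩ + α(t)·⟨ẋ̃(t), ẋ_d(t)⟩/‖ẋ_d(t)‖ ≤ 0` for `t ≥ 0`,
so `V` is nonincreasing on `[0,∞)`. -/
theorem stmt8 (n : ℕ) (x xd : ℝ → EuclideanSpace ℝ (Fin n))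
    (KP KD : Matrix (Fin n) (Fin n) ℝ) (α : ℝ → ℝ)
    (hx : Differentiable ℝ x) (hx' : Differentiable ℝ (deriv x))
    (hxd : Differentiable ℝ xd) (hxd' : Differentiable ℝ (deriv xd))
    (hxdne : ∀ t, deriv xd t ≠ 0)
    (hKPsymm : KP.IsSymm) (hKP : KP.PosDef)
    (hKDsymm : KD.IsSymm) (hKD : KD.PosDef)
    (hα : Continuous α) (hαpos : ∀ t, 0 < α t)
    (e z : ℝ → EuclideanSpace ℝ (Fin n))
    (he : ∀ t, e t = deriv x t - deriv xd t)
    (hz : ∀ t, z t = ∫ s in (0:ℝ)..t, e s)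
    (hdyn : ∀ t, deriv (deriv x) t = deriv (deriv xd) t
        - Matrix.toEuclideanLin KD (e t) - Matrix.toEuclideanLin KP (z t)
        + α t • ((‖deriv xd t‖⁻¹) • deriv xd t))
    (hhelp : ∀ t, 0 ≤ t → ⟪e t, deriv xd t⟫ ≤ 0)
    (V : ℝ → ℝ)
    (hV : ∀ t, V t = (1/2) * ‖e t‖^2
        + (1/2) * ⟪z t, Matrix.toEuclideanLin KP (z t)⟫) :
    (∀ t, deriv V t = -⟪e t, Matrix.toEuclideanLin KD (e t)⟫
        + α t * ⟪e t, deriv xd t⟫ / ‖deriv xd t‖) ∧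
    (∀ t, 0 ≤ t → deriv V t ≤ 0) ∧
    AntitoneOn V (Set.Ici (0:ℝ)) :=
  stmt8_general n x xd KP KD α hx' hxd' hKPsymm hKD hαpos e z he hz hdyn hhelp V hV
end

section
/- Let Σ_D (m×m), Σ_y (k×k), and Σ_d (n×n) be symmetric positive definite real matrices, D a real m×n matrix, Y a real k×n matrix, b_D ∈ ℝᵐ, b_Y, y ∈ ℝᵏ, and μ_d ∈ ℝⁿ. Define Σ̄_D = (Dᵀ Σ_D⁻¹ D + Σ_d⁻¹)⁻¹, μ̄_D = Σ̄_D (Σ_d⁻¹ μ_d − Dᵀ Σ_D⁻¹ b_D), Σ_{d|y} = (Σ̄_D⁻¹ + Yᵀ Σ_y⁻¹ Y)⁻¹, and μ_{d|y} = Σ_{d|y}(Yᵀ Σ_y⁻¹ (y − b_Y) + Σ̄_D⁻¹ μ̄_D). Then the weighted least-squares objective J(d) = (D d + b_D)ᵀ Σ_D⁻¹ (D d + b_D) + (Y d + b_Y − y)ᵀ Σ_y⁻¹ (Y d + b_Y − y) + (d − μ_d)ᵀ Σ_d⁻¹ (d − μ_d) attains its global minimum over ℝⁿ at d = μ_{d|y},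 and this minimizer is unique: J(μ_{d|y}) ≤ J(d) for all d, with equality only if d = μ_{d|y}. -/
/-!
`J` is a quadratic function of `d` whose halved Hessian `Q = DᵀΣ_D⁻¹D + Σ_d⁻¹ + YᵀΣ_y⁻¹Y`
(which is `Σ_{d|y}⁻¹`) is positive definite. Expanding around any `x` gives
`J (x + e) = J x + 2 eᵀ(Q x - b) + eᵀ Q e` with `b = YᵀΣ_y⁻¹(y - b_Y) + Σ_d⁻¹μ_d - DᵀΣ_D⁻¹b_D`,
and unfolding `Σ̄_D`, `μ̄_D`, `Σ_{d|y}` shows that `μ_{d|y} = Q⁻¹ b` solves the normal equations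
`Q x = b`. Hence `J (μ_{d|y} + e) - J μ_{d|y} = eᵀ Q e > 0` for every `e ≠ 0`.
-/

open Matrix

section QuadraticExpansion

variable {R ι ν : Type*} [CommRing R] [Fintype ι] [Fintype ν]

theorem Matrix.IsSymm.dotProduct_mulVec_comm {W : Matrix ι ι R} (hW : W.IsSymm) (v w : ι → R) :
    v ⬝ᵥ W *ᵥ w = w ⬝ᵥ W *ᵥ v := by
  rw [dotProduct_mulVec, ← vecMul_transpose, hW.eq, dotProduct_comm]

theorem Matrix.IsSymm.dotProduct_mulVec_add_mulVec {W : Matrix ι ι R} (hW : W.IsSymm)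
    (X : Matrix ι ν R) (a : ι → R) (e : ν → R) :
    (a + X *ᵥ e) ⬝ᵥ W *ᵥ (a + X *ᵥ e)
      = a ⬝ᵥ W *ᵥ a + 2 * (e ⬝ᵥ (Xᵀ * W) *ᵥ a) + e ⬝ᵥ (Xᵀ * W * X) *ᵥ e := by
  have hX : ∀ v, X *ᵥ e ⬝ᵥ v = e ⬝ᵥ Xᵀ *ᵥ v := fun v => by
    rw [dotProduct_comm, dotProduct_mulVec, ← mulVec_transpose, dotProduct_comm]
  rw [mulVec_add, dotProduct_add, add_dotProduct, add_dotProduct,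
    hW.dotProduct_mulVec_comm a (X *ᵥ e), hX, hX, mulVec_mulVec, mulVec_mulVec, mulVec_mulVec,
    Matrix.mul_assoc]
  ring

end QuadraticExpansion

theorem Matrix.PosDef.unique_minimizer_of_eq_add_quadForm {ι : Type*} [Fintype ι]
    {Q : Matrix ι ι ℝ} (hQ : Q.PosDef) {J : (ι → ℝ) → ℝ} {x : ι → ℝ}
    (hJ : ∀ e, J (x + e) = J x + e ⬝ᵥ Q *ᵥ e) :
    (∀ d, J x ≤ J d) ∧ (∀ d, J d = J x → d = x) := by
  have hJd : ∀ d, J d = J x + (d - x) ⬝ᵥ Q *ᵥ (d - x) := fun d => by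
    rw [← hJ, add_sub_cancel]
  refine ⟨fun d => ?_, fun d hd => ?_⟩
  · have := hQ.posSemidef.dotProduct_mulVec_nonneg (d - x)
    simp only [star_trivial] at this
    linarith [hJd d]
  · by_contra hne
    have := hQ.dotProduct_mulVec_pos (sub_ne_zero.mpr hne)
    simp only [star_trivial] at this
    linarith [hJd d]

theorem Matrix.PosDef.inv_isSymm {ι : Type*} [Fintype ι] [DecidableEq ι] {S : Matrix ι ι ℝ}
    (hS : S.PosDef) : S⁻¹.IsSymm :=
  isHermitian_iff_isSymm.mp hS.inv.isHermitian

theorem Matrix.PosDef.posSemidef_transpose_mul_inv_mul {ι ν : Type*} [Fintype ι] [DecidableEq ι]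
    [Fintype ν] {S : Matrix ι ι ℝ} (hS : S.PosDef) (X : Matrix ι ν ℝ) :
    (Xᵀ * S⁻¹ * X).PosSemidef := by
  simpa only [conjTranspose_eq_transpose_of_trivial] using
    hS.inv.posSemidef.conjTranspose_mul_mul_same X

section WeightedLeastSquares

variable {R ι κ ν : Type*} [CommRing R] [Fintype ι] [Fintype κ] [Fintype ν]

def mapObjective (WD : Matrix ι ι R) (Wy : Matrix κ κ R) (Wd : Matrix ν ν R)
    (D : Matrix ι ν R) (Y : Matrix κ ν R) (bD : ι → R) (bY y : κ → R) (mud d : ν → R) : R :=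
  (D *ᵥ d + bD) ⬝ᵥ WD *ᵥ (D *ᵥ d + bD) + (Y *ᵥ d + bY - y) ⬝ᵥ Wy *ᵥ (Y *ᵥ d + bY - y)
    + (d - mud) ⬝ᵥ Wd *ᵥ (d - mud)

variable {WD : Matrix ι ι R} {Wy : Matrix κ κ R} {Wd : Matrix ν ν R}

theorem mapObjective_add (hWD : WD.IsSymm) (hWy : Wy.IsSymm) (hWd : Wd.IsSymm)
    (D : Matrix ι ν R) (Y : Matrix κ ν R) (bD : ι → R) (bY y : κ → R) (mud x e : ν → R) :
    mapObjective WD Wy Wd D Y bD bY y mud (x + e)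
      = mapObjective WD Wy Wd D Y bD bY y mud x
        + 2 * (e ⬝ᵥ ((Dᵀ * WD * D + Wd + Yᵀ * Wy * Y) *ᵥ x
          - ((Yᵀ * Wy) *ᵥ (y - bY) + (Wd *ᵥ mud - (Dᵀ * WD) *ᵥ bD))))
        + e ⬝ᵥ (Dᵀ * WD * D + Wd + Yᵀ * Wy * Y) *ᵥ e := by
  classical
  have hD : D *ᵥ (x + e) + bD = (D *ᵥ x + bD) + D *ᵥ e := by rw [mulVec_add]; abel
  have hY : Y *ᵥ (x + e) + bY - y = (Y *ᵥ x + bY - y) + Y *ᵥ e := by rw [mulVec_add]; abel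
  have hd : x + e - mud = (x - mud) + (1 : Matrix ν ν R) *ᵥ e := by rw [one_mulVec]; abel
  simp only [mapObjective]
  rw [hD, hY, hd, hWD.dotProduct_mulVec_add_mulVec, hWy.dotProduct_mulVec_add_mulVec,
    hWd.dotProduct_mulVec_add_mulVec, transpose_one, Matrix.one_mul, Matrix.mul_one]
  simp only [mulVec_add, mulVec_sub, add_mulVec, ← mulVec_mulVec, dotProduct_add, dotProduct_sub]
  ring

theorem mapObjective_add_of_normal_eq (hWD : WD.IsSymm) (hWy : Wy.IsSymm) (hWd : Wd.IsSymm)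
    {D : Matrix ι ν R} {Y : Matrix κ ν R} {bD : ι → R} {bY y : κ → R} {mud x : ν → R}
    (hx : (Dᵀ * WD * D + Wd + Yᵀ * Wy * Y) *ᵥ x
      = (Yᵀ * Wy) *ᵥ (y - bY) + (Wd *ᵥ mud - (Dᵀ * WD) *ᵥ bD)) (e : ν → R) :
    mapObjective WD Wy Wd D Y bD bY y mud (x + e)
      = mapObjective WD Wy Wd D Y bD bY y mud x + e ⬝ᵥ (Dᵀ * WD * D + Wd + Yᵀ * Wy * Y) *ᵥ e := by
  rw [mapObjective_add hWD hWy hWd, hx, sub_self, dotProduct_zero, mul_zero, add_zero]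

end WeightedLeastSquares

/-- The MAP estimate of the dynamic variables is the unique global minimizer of the
weighted least-squares objective
`J(d) = (Dd+b_D)ᵀΣ_D⁻¹(Dd+b_D) + (Yd+b_Y−y)ᵀΣ_y⁻¹(Yd+b_Y−y) + (d−μ_d)ᵀΣ_d⁻¹(d−μ_d)`,
namely `d^MAP = μ_{d|y} = Σ_{d|y}(YᵀΣ_y⁻¹(y−b_Y) + Σ̄_D⁻¹ μ̄_D)` with
`Σ̄_D = (DᵀΣ_D⁻¹D + Σ_d⁻¹)⁻¹`, `μ̄_D = Σ̄_D(Σ_d⁻¹μ_d − DᵀΣ_D⁻¹b_D)`, and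
`Σ_{d|y} = (Σ̄_D⁻¹ + YᵀΣ_y⁻¹Y)⁻¹`. -/
theorem stmt11 (m k n : ℕ)
    (SigD : Matrix (Fin m) (Fin m) ℝ) (Sigy : Matrix (Fin k) (Fin k) ℝ)
    (Sigd : Matrix (Fin n) (Fin n) ℝ)
    (D : Matrix (Fin m) (Fin n) ℝ) (Y : Matrix (Fin k) (Fin n) ℝ)
    (bD : Fin m → ℝ) (bY y : Fin k → ℝ) (mud : Fin n → ℝ)
    (hSigD : SigD.PosDef) (hSigy : Sigy.PosDef) (hSigd : Sigd.PosDef)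
    (Sbar : Matrix (Fin n) (Fin n) ℝ) (mubar : Fin n → ℝ)
    (Sdy : Matrix (Fin n) (Fin n) ℝ) (mudy : Fin n → ℝ)
    (hSbar : Sbar = (Dᵀ * SigD⁻¹ * D + Sigd⁻¹)⁻¹)
    (hmubar : mubar = Sbar.mulVec (Sigd⁻¹.mulVec mud - (Dᵀ * SigD⁻¹).mulVec bD))
    (hSdy : Sdy = (Sbar⁻¹ + Yᵀ * Sigy⁻¹ * Y)⁻¹)
    (hmudy : mudy = Sdy.mulVec ((Yᵀ * Sigy⁻¹).mulVec (y - bY) + Sbar⁻¹.mulVec mubar))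
    (J : (Fin n → ℝ) → ℝ)
    (hJ : ∀ d, J d = (D.mulVec d + bD) ⬝ᵥ SigD⁻¹.mulVec (D.mulVec d + bD)
        + (Y.mulVec d + bY - y) ⬝ᵥ Sigy⁻¹.mulVec (Y.mulVec d + bY - y)
        + (d - mud) ⬝ᵥ Sigd⁻¹.mulVec (d - mud)) :
    (∀ d : Fin n → ℝ, J mudy ≤ J d) ∧
      (∀ d : Fin n → ℝ, J d = J mudy → d = mudy) := by
  have hP : (Dᵀ * SigD⁻¹ * D + Sigd⁻¹).PosDef :=
    PosDef.posSemidef_add (hSigD.posSemidef_transpose_mul_inv_mul D) hSigd.inv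
  have hQ : (Dᵀ * SigD⁻¹ * D + Sigd⁻¹ + Yᵀ * Sigy⁻¹ * Y).PosDef :=
    hP.add_posSemidef (hSigy.posSemidef_transpose_mul_inv_mul Y)
  have hP_det := (isUnit_iff_isUnit_det _).mp hP.isUnit
  have hSbar_inv : Sbar⁻¹ = Dᵀ * SigD⁻¹ * D + Sigd⁻¹ := by
    rw [hSbar, nonsing_inv_nonsing_inv _ hP_det]
  have hprior_info : Sbar⁻¹ *ᵥ mubar = Sigd⁻¹ *ᵥ mud - (Dᵀ * SigD⁻¹) *ᵥ bD := by
    rw [hmubar, mulVec_mulVec, hSbar_inv, hSbar, mul_nonsing_inv _ hP_det, one_mulVec]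
  have hnormal : (Dᵀ * SigD⁻¹ * D + Sigd⁻¹ + Yᵀ * Sigy⁻¹ * Y) *ᵥ mudy
      = (Yᵀ * Sigy⁻¹) *ᵥ (y - bY) + (Sigd⁻¹ *ᵥ mud - (Dᵀ * SigD⁻¹) *ᵥ bD) := by
    rw [hmudy, hprior_info, hSdy, hSbar_inv, mulVec_mulVec,
      mul_nonsing_inv _ ((isUnit_iff_isUnit_det _).mp hQ.isUnit), one_mulVec]
  obtain rfl : J = mapObjective SigD⁻¹ Sigy⁻¹ Sigd⁻¹ D Y bD bY y mud := funext hJ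
  exact hQ.unique_minimizer_of_eq_add_quadForm <|
    mapObjective_add_of_normal_eq hSigD.inv_isSymm hSigy.inv_isSymm hSigd.inv_isSymm hnormal
end
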